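/- Let m ≥ 3 and let v₁, …, v_m ∈ ℝ³ be vectors such that some three of them are linearly independent. Then the 6×6 real matrix Σ_{i=1}^m fromBlocks(S(vᵢ)ᵀ·S(vᵢ), S(vᵢ)ᵀ; S(vᵢ), I₃) is positive definite. (This is the full-rank condition on H̃ᵀΨ̄^{-1}H̃ in Theorem 2, holding when three landmarks are non-coplanar with the robot position.) -/

import Mathlib

open Matrix

/-- `S y` is the skew-symmetric matrix with `S y *ᵥ x = y ×₃ x` (cross-product matrix). -/
def S (y : Fin 3 → ℝ) : Matrix (Fin 3) (Fin 3) ℝ :=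
  !![0, -y 2, y 1; y 2, 0, -y 0; -y 1, y 0, 0]

lemma S_add (u w : Fin 3 → ℝ) : S (u + w) = S u + S w := by
  ext i j; fin_cases i <;> fin_cases j <;> simp [S] <;> ring

lemma S_smul (c : ℝ) (u : Fin 3 → ℝ) : S (c • u) = c • S u := by
  ext i j; fin_cases i <;> fin_cases j <;> simp [S]

lemma dot_S_self (u a : Fin 3 → ℝ) : u ⬝ᵥ (S u *ᵥ a) = 0 := by
  simp [S, mulVec, dotProduct, Fin.sum_univ_three]; ring

lemma qform (n : ℕ) (M : Matrix (Fin n) (Fin n) ℝ) (a b : Fin n → ℝ) :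
    a ⬝ᵥ ((Mᵀ * M) *ᵥ a + Mᵀ *ᵥ b) + b ⬝ᵥ (M *ᵥ a + b)
      = (M *ᵥ a + b) ⬝ᵥ (M *ᵥ a + b) := by
  have h1 : ∀ w : Fin n → ℝ, a ⬝ᵥ (Mᵀ *ᵥ w) = (M *ᵥ a) ⬝ᵥ w := by
    intro w
    rw [mulVec_transpose, dotProduct_comm, ← dotProduct_mulVec, dotProduct_comm]
  simp only [dotProduct_add, add_dotProduct, ← mulVec_mulVec, h1]
  rw [dotProduct_comm b (M *ᵥ a)]

/-- the key kernel lemma -/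
lemma key (w : Fin 3 → (Fin 3 → ℝ)) (hw : LinearIndependent ℝ w)
    (a b : Fin 3 → ℝ) (h : ∀ t, S (w t) *ᵥ a + b = 0) : a = 0 ∧ b = 0 := by
  have hspan : Submodule.span ℝ (Set.range w) = ⊤ :=
    hw.span_eq_top_of_card_eq_finrank (by simp)
  -- b = 0 : each w t is orthogonal to b, functional u ↦ u ⬝ᵥ b vanishes on a spanning set
  have hb : b = 0 := by
    let g : (Fin 3 → ℝ) →ₗ[ℝ] ℝ :=
      { toFun := fun u => u ⬝ᵥ b
        map_add' := fun x y => add_dotProduct x y b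
        map_smul' := fun c x => smul_dotProduct c x b }
    have hg : ∀ u, g u = 0 := by
      have hle : Submodule.span ℝ (Set.range w) ≤ LinearMap.ker g := by
        rw [Submodule.span_le]
        rintro _ ⟨t, rfl⟩
        have hbe : b = -(S (w t) *ᵥ a) := by
          have := h t; linear_combination (norm := module) this
        rw [SetLike.mem_coe, LinearMap.mem_ker]
        show (w t) ⬝ᵥ b = 0
        rw [hbe, dotProduct_neg, dot_S_self, neg_zero]
      have hker : LinearMap.ker g = ⊤ := top_le_iff.mp (le_trans (le_of_eq hspan.symm) hle)
      intro u
      exact LinearMap.mem_ker.mp (hker ▸ Submodule.mem_top)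
    have : b ⬝ᵥ b = 0 := hg b
    exact dotProduct_self_eq_zero.mp this
  refine ⟨?_, hb⟩
  -- a = 0 : now S (w t) *ᵥ a = 0 for all t, so by linearity S u *ᵥ a = 0 for all u
  have h' : ∀ t, S (w t) *ᵥ a = 0 := by
    intro t; have := h t; rw [hb, add_zero] at this; exact this
  let L : (Fin 3 → ℝ) →ₗ[ℝ] (Fin 3 → ℝ) :=
    { toFun := fun u => S u *ᵥ a
      map_add' := fun x y => by
        show S (x + y) *ᵥ a = S x *ᵥ a + S y *ᵥ a
        rw [S_add, add_mulVec]
      map_smul' := fun c x => by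
        show S (c • x) *ᵥ a = c • (S x *ᵥ a)
        rw [S_smul, smul_mulVec] }
  have hL : ∀ u, S u *ᵥ a = 0 := by
    have hle : Submodule.span ℝ (Set.range w) ≤ LinearMap.ker L := by
      rw [Submodule.span_le]
      rintro _ ⟨t, rfl⟩
      exact h' t
    have hker : LinearMap.ker L = ⊤ := top_le_iff.mp (le_trans (le_of_eq hspan.symm) hle)
    intro u
    exact LinearMap.mem_ker.mp (hker ▸ Submodule.mem_top)
  have h0 := hL ![1, 0, 0]
  have h1 := hL ![0, 1, 0]
  have e1 := congrFun h0 1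
  have e2 := congrFun h0 2
  have e0 := congrFun h1 2
  simp [S, mulVec, dotProduct, Fin.sum_univ_three] at e0 e1 e2
  funext j
  fin_cases j
  · simpa using e0
  · simpa using e2
  · simpa using e1

/-- The full-rank condition on `H̃ᵀΨ̄⁻¹H̃` in Theorem 2: if `m ≥ 3` and some three of the
vectors `v₁, …, v_m ∈ ℝ³` are linearly independent (three landmarks non-coplanar with the
robot position), then `Σᵢ fromBlocks (S(vᵢ)ᵀS(vᵢ)) S(vᵢ)ᵀ S(vᵢ) I₃` is positive definite. -/
theorem sum_fromBlocks_posDef (m : ℕ) (hm : 3 ≤ m) (v : Fin m → (Fin 3 → ℝ))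
    (hv : ∃ i j k : Fin m, LinearIndependent ℝ ![v i, v j, v k]) :
    (∑ i : Fin m,
      Matrix.fromBlocks ((S (v i))ᵀ * S (v i)) (S (v i))ᵀ (S (v i))
        (1 : Matrix (Fin 3) (Fin 3) ℝ)).PosDef := by
  obtain ⟨i, j, k, hijk⟩ := hv
  rw [posDef_iff_dotProduct_mulVec]
  constructor
  · -- Hermitian
    unfold Matrix.IsHermitian
    rw [conjTranspose_sum]
    refine Finset.sum_congr rfl fun t _ => ?_
    have : ∀ A : Matrix (Fin 3 ⊕ Fin 3) (Fin 3 ⊕ Fin 3) ℝ, Aᴴ = Aᵀ := fun A => rfl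
    rw [this, fromBlocks_transpose, transpose_mul, transpose_transpose,
      transpose_one]
  · intro x hx
    have hsx : star x = x := rfl
    have hsum : (∑ i : Fin m, Matrix.fromBlocks ((S (v i))ᵀ * S (v i)) (S (v i))ᵀ (S (v i))
        (1 : Matrix (Fin 3) (Fin 3) ℝ)) *ᵥ x
        = ∑ i : Fin m, (Matrix.fromBlocks ((S (v i))ᵀ * S (v i)) (S (v i))ᵀ (S (v i))
        (1 : Matrix (Fin 3) (Fin 3) ℝ)) *ᵥ x :=
      map_sum (AddMonoidHom.mk' (fun A : Matrix (Fin 3 ⊕ Fin 3) (Fin 3 ⊕ Fin 3) ℝ => A *ᵥ x)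
        (fun A B => add_mulVec A B x)) _ Finset.univ
    have hds : x ⬝ᵥ (∑ i : Fin m, (Matrix.fromBlocks ((S (v i))ᵀ * S (v i)) (S (v i))ᵀ (S (v i))
        (1 : Matrix (Fin 3) (Fin 3) ℝ)) *ᵥ x)
        = ∑ i : Fin m, x ⬝ᵥ ((Matrix.fromBlocks ((S (v i))ᵀ * S (v i)) (S (v i))ᵀ (S (v i))
        (1 : Matrix (Fin 3) (Fin 3) ℝ)) *ᵥ x) :=
      map_sum (AddMonoidHom.mk' (fun y : Fin 3 ⊕ Fin 3 → ℝ => x ⬝ᵥ y)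
        (fun y z => dotProduct_add x y z)) _ Finset.univ
    rw [hsx, hsum, hds]
    set a : Fin 3 → ℝ := x ∘ Sum.inl with ha
    set b : Fin 3 → ℝ := x ∘ Sum.inr with hb2
    have hxe : x = Sum.elim a b := by funext s; cases s <;> rfl
    have hterm : ∀ t : Fin m,
        x ⬝ᵥ (Matrix.fromBlocks ((S (v t))ᵀ * S (v t)) (S (v t))ᵀ (S (v t))
          (1 : Matrix (Fin 3) (Fin 3) ℝ) *ᵥ x)
        = (S (v t) *ᵥ a + b) ⬝ᵥ (S (v t) *ᵥ a + b) := by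
      intro t
      rw [hxe, fromBlocks_mulVec, sumElim_dotProduct_sumElim, one_mulVec]
      exact qform 3 (S (v t)) a b
    simp only [hterm]
    have hnonneg : ∀ t : Fin m, (0:ℝ) ≤ (S (v t) *ᵥ a + b) ⬝ᵥ (S (v t) *ᵥ a + b) := by
      intro t
      exact Finset.sum_nonneg fun s _ => mul_self_nonneg _
    by_cases hall : ∀ t : Fin m, S (v t) *ᵥ a + b = 0
    · exfalso
      have := key ![v i, v j, v k] hijk a b (by
        intro t; fin_cases t <;> simpa using hall _)
      apply hx
      rw [hxe, this.1, this.2]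
      funext s; cases s <;> rfl
    · push_neg at hall
      obtain ⟨t, ht⟩ := hall
      refine Finset.sum_pos' (fun s _ => hnonneg s) ⟨t, Finset.mem_univ t, ?_⟩
      exact lt_of_le_of_ne (hnonneg t) fun h => ht (dotProduct_self_eq_zero.mp h.symm)
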